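/- Let α, β : Γ → Δ be graph homomorphisms with a common retract ρ : Δ → Γ (ρ ∘ α = id_Γ = ρ ∘ β). Then every element g of AΓ with (Aα)g = (Aβ)g lies in the subgroup of AΓ generated by the vertices v of Γ satisfying αv = βv. -/

import Mathlib

/-!
A common retract `ρ` lets one fold `AΔ` back onto `AΓ`: the map `F : AΔ → AΓ` sending a vertex
`w` to `ρ w` when `w` lies in the image of `α`, and to `1` otherwise, is a homomorphism with
`F ∘ Aα = id`. Since `α` and `β` are both sections of `ρ`, a vertex `β v` lies in the image of `α`
exactly when `α v = β v`, so `F ∘ Aβ` is the projection of `AΓ` killing every vertex not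
equalized by `α` and `β`. Hence an equalized `g` equals `F (Aα g) = F (Aβ g)`, its own projection,
which lies in the special subgroup generated by the equalized vertices.
-/

/-- A (reflexive, symmetric) graph: a set of vertices with a reflexive
symmetric relation. -/
structure Gph : Type 1 where
  V : Type
  rel : V → V → Prop
  refl : ∀ v, rel v v
  symm : ∀ {v w}, rel v w → rel w v

/-- A homomorphism of graphs: a function on vertices preserving the relation. -/
@[ext]
structure GphHom (Γ Δ : Gph) where
  toFun : Γ.V → Δ.V
  map_rel : ∀ {v w}, Γ.rel v w → Δ.rel (toFun v) (toFun w)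

/-- The identity graph homomorphism. -/
def GphHom.id (Γ : Gph) : GphHom Γ Γ :=
  ⟨fun v => v, fun h => h⟩

/-- Composition of graph homomorphisms. -/
def GphHom.comp {Γ Δ Θ : Gph} (ψ : GphHom Δ Θ) (φ : GphHom Γ Δ) : GphHom Γ Θ :=
  ⟨fun v => ψ.toFun (φ.toFun v), fun h => ψ.map_rel (φ.map_rel h)⟩

/-- The commutator relators of the right-angled Artin group of `Γ`. -/
def raagRels (Γ : Gph) : Set (FreeGroup Γ.V) :=
  { r | ∃ v w, Γ.rel v w ∧
      r = FreeGroup.of v * FreeGroup.of w * (FreeGroup.of v)⁻¹ * (FreeGroup.of w)⁻¹ }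

/-- The right-angled Artin group of a graph `Γ`: generated by the vertices,
with commutation relations given by the edges. -/
abbrev Raag (Γ : Gph) : Type :=
  PresentedGroup (raagRels Γ)

/-- The image of a vertex `v` as a generator of the right-angled Artin group. -/
def Raag.of {Γ : Gph} (v : Γ.V) : Raag Γ :=
  PresentedGroup.of v

/-- Related vertices commute in the right-angled Artin group. -/
theorem Raag.commute_of {Γ : Gph} {v w : Γ.V} (h : Γ.rel v w) :
    Commute (Raag.of v) (Raag.of w) := by
  have h1 : (PresentedGroup.mk (raagRels Γ))
      (FreeGroup.of v * FreeGroup.of w * (FreeGroup.of v)⁻¹ * (FreeGroup.of w)⁻¹) = 1 := by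
    apply (QuotientGroup.eq_one_iff _).2
    exact Subgroup.subset_normalClosure ⟨v, w, h, rfl⟩
  rw [← commutatorElement_eq_one_iff_commute]
  simp only [commutatorElement_def, map_mul, map_inv] at h1
  exact h1

/-- The universal property of the right-angled Artin group. -/
def Raag.lift {Γ : Gph} {G : Type*} [Group G] (f : Γ.V → G)
    (hf : ∀ {v w}, Γ.rel v w → Commute (f v) (f w)) : Raag Γ →* G :=
  PresentedGroup.toGroup (f := f) (by
    rintro r ⟨v, w, hvw, rfl⟩
    have := commutatorElement_eq_one_iff_commute.2 (hf hvw)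
    rw [commutatorElement_def] at this
    simpa only [map_mul, map_inv, FreeGroup.lift_apply_of] using this)

@[simp]
theorem Raag.lift_of {Γ : Gph} {G : Type*} [Group G] (f : Γ.V → G)
    (hf : ∀ {v w}, Γ.rel v w → Commute (f v) (f w)) (v : Γ.V) :
    Raag.lift f hf (Raag.of v) = f v :=
  PresentedGroup.toGroup.of _

theorem Raag.hom_ext {Γ : Gph} {G : Type*} [Group G] {f g : Raag Γ →* G}
    (h : ∀ v, f (Raag.of v) = g (Raag.of v)) : f = g :=
  PresentedGroup.ext h

/-- The group homomorphism `Aφ` induced by a graph homomorphism `φ`. -/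
def GphHom.map {Γ Δ : Gph} (φ : GphHom Γ Δ) : Raag Γ →* Raag Δ :=
  Raag.lift (fun v => Raag.of (φ.toFun v)) (fun h => Raag.commute_of (φ.map_rel h))

@[simp]
theorem GphHom.map_of {Γ Δ : Gph} (φ : GphHom Γ Δ) (v : Γ.V) :
    φ.map (Raag.of v) = Raag.of (φ.toFun v) :=
  Raag.lift_of _ (fun h => Raag.commute_of (φ.map_rel h)) v

/-- The commutation graph of a group `G`: vertices are elements of `G`,
related exactly when they commute. -/
abbrev commGraph (G : Type) [Group G] : Gph where
  V := G
  rel g h := g * h = h * g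
  refl _ := rfl
  symm h := h.symm

/-- `AC G`: the right-angled Artin group of the commutation graph of `G`. -/
abbrev AC (G : Type) [Group G] : Type :=
  Raag (commGraph G)

/-- `ACf : ACG →* ACH`, `[g] ↦ [f g]`, induced by a group homomorphism `f`. -/
def ACmap {G H : Type} [Group G] [Group H] (f : G →* H) : AC G →* AC H :=
  GphHom.map (Γ := commGraph G) (Δ := commGraph H)
    ⟨f, fun {a b} h => show f a * f b = f b * f a by
      rw [← map_mul, show a * b = b * a from h, map_mul]⟩

@[simp]
theorem ACmap_of {G H : Type} [Group G] [Group H] (f : G →* H) (g : G) :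
    ACmap f (Raag.of (Γ := commGraph G) g) = Raag.of (Γ := commGraph H) (f g) :=
  GphHom.map_of _ _

/-- The counit `ε_G : ACG →* G`, `[g] ↦ g`. -/
def ACcounit (G : Type) [Group G] : AC G →* G :=
  Raag.lift (Γ := commGraph G) (fun g => g) (fun h => h)

@[simp]
theorem ACcounit_of {G : Type} [Group G] (g : G) :
    ACcounit G (Raag.of (Γ := commGraph G) g) = g :=
  Raag.lift_of (Γ := commGraph G) (fun g => g) (fun h => h) g

/-- The comultiplication `δ_G : ACG →* AC(ACG)`, `[g] ↦ [[g]]`. -/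
def ACcomul (G : Type) [Group G] : AC G →* AC (AC G) :=
  Raag.lift (Γ := commGraph G)
    (fun g => Raag.of (Γ := commGraph (AC G)) (Raag.of (Γ := commGraph G) g))
    (fun h => Raag.commute_of (Raag.commute_of h))

@[simp]
theorem ACcomul_of {G : Type} [Group G] (g : G) :
    ACcomul G (Raag.of (Γ := commGraph G) g) =
      Raag.of (Γ := commGraph (AC G)) (Raag.of (Γ := commGraph G) g) :=
  Raag.lift_of (Γ := commGraph G) _ (fun h => Raag.commute_of (Raag.commute_of h)) g

/-- The canonical `AC`-coalgebra structure map on a right-angled Artin group,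
sending each vertex generator `v` to `[v]`. -/
def raagCoalgStr (Γ : Gph) : Raag Γ →* AC (Raag Γ) :=
  Raag.lift (fun v => Raag.of (Γ := commGraph (Raag Γ)) (Raag.of v))
    (fun h => Raag.commute_of (Raag.commute_of h))

@[simp]
theorem raagCoalgStr_of {Γ : Gph} (v : Γ.V) :
    raagCoalgStr Γ (Raag.of v) = Raag.of (Γ := commGraph (Raag Γ)) (Raag.of v) :=
  Raag.lift_of _ (fun h => Raag.commute_of (Raag.commute_of h)) v

/-- An `AC`-coalgebra structure on a group `G` is a group homomorphism
`𝔤 : G →* ACG` satisfying the counit and coassociativity laws. -/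
def IsACCoalgebra {G : Type} [Group G] (𝔤 : G →* AC G) : Prop :=
  (ACcounit G).comp 𝔤 = MonoidHom.id G ∧ (ACmap 𝔤).comp 𝔤 = (ACcomul G).comp 𝔤

/-- `f` is an `AC`-cohomomorphism from `(G, 𝔤)` to `(H, 𝔥)`. -/
def IsACCohom {G H : Type} [Group G] [Group H]
    (𝔤 : G →* AC G) (𝔥 : H →* AC H) (f : G →* H) : Prop :=
  𝔥.comp f = (ACmap f).comp 𝔤

theorem GphHom.leftInverse_of_comp_eq_id {Γ Δ : Gph} {φ : GphHom Γ Δ} {ψ : GphHom Δ Γ}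
    (h : ψ.comp φ = GphHom.id Γ) : Function.LeftInverse ψ.toFun φ.toFun :=
  congrFun (congrArg GphHom.toFun h)

namespace Raag

variable {Γ : Gph}

theorem commute_ite_of {s : Set Γ.V} [DecidablePred (· ∈ s)] {v w : Γ.V} (h : Γ.rel v w) :
    Commute (if v ∈ s then of v else 1) (if w ∈ s then of w else 1) := by
  split_ifs
  · exact commute_of h
  all_goals simp

def proj (s : Set Γ.V) [DecidablePred (· ∈ s)] : Raag Γ →* Raag Γ :=
  lift (fun v => if v ∈ s then of v else 1) commute_ite_of

@[simp]
theorem proj_of (s : Set Γ.V) [DecidablePred (· ∈ s)] (v : Γ.V) :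
    proj s (of v) = if v ∈ s then of v else 1 :=
  lift_of _ commute_ite_of v

theorem proj_mem_closure (s : Set Γ.V) [DecidablePred (· ∈ s)] (x : Raag Γ) :
    proj s x ∈ Subgroup.closure (of '' s) := by
  refine PresentedGroup.generated_by _ ((Subgroup.closure (of '' s)).comap (proj s)) ?_ x
  intro v
  rw [Subgroup.mem_comap, ← of, proj_of]
  split_ifs with hv
  · exact Subgroup.subset_closure ⟨v, hv, rfl⟩
  · exact one_mem _

end Raag

open Classical in
noncomputable def GphHom.fold {Γ Δ : Gph} (α : GphHom Γ Δ) (ρ : GphHom Δ Γ) :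
    Raag Δ →* Raag Γ :=
  ρ.map.comp (Raag.proj (Set.range α.toFun))

section Fold

variable {Γ Δ : Gph} {α β : GphHom Γ Δ} {ρ : GphHom Δ Γ}

theorem GphHom.fold_comp_map_self (h : ρ.comp α = GphHom.id Γ) :
    (α.fold ρ).comp α.map = MonoidHom.id (Raag Γ) := by
  refine Raag.hom_ext fun v => ?_
  simp [GphHom.fold, GphHom.leftInverse_of_comp_eq_id h v]

theorem GphHom.mem_range_iff_of_comp_eq_id (h₁ : ρ.comp α = GphHom.id Γ)
    (h₂ : ρ.comp β = GphHom.id Γ) (v : Γ.V) :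
    β.toFun v ∈ Set.range α.toFun ↔ α.toFun v = β.toFun v := by
  refine ⟨fun ⟨u, hu⟩ => ?_, fun hv => ⟨v, hv⟩⟩
  have : u = v := by
    rw [← leftInverse_of_comp_eq_id h₁ u, hu, leftInverse_of_comp_eq_id h₂ v]
  exact this ▸ hu

open Classical in
theorem GphHom.fold_comp_map_eq_proj (h₁ : ρ.comp α = GphHom.id Γ)
    (h₂ : ρ.comp β = GphHom.id Γ) :
    (α.fold ρ).comp β.map = Raag.proj {v | α.toFun v = β.toFun v} := by
  refine Raag.hom_ext fun v => ?_
  simp only [GphHom.fold, MonoidHom.comp_apply, GphHom.map_of, Raag.proj_of,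
    mem_range_iff_of_comp_eq_id h₁ h₂, Set.mem_ofPred_eq]
  split_ifs
  · rw [GphHom.map_of, leftInverse_of_comp_eq_id h₂ v]
  · exact map_one _

end Fold

/-- If `α, β : Γ → Δ` admit a common retract `ρ`, then every `g ∈ AΓ` with
`(Aα)g = (Aβ)g` lies in the subgroup of `AΓ` generated by the vertices `v`
with `αv = βv`. -/
theorem mem_closure_of_equalized {Γ Δ : Gph} (α β : GphHom Γ Δ)
    (ρ : GphHom Δ Γ) (h₁ : ρ.comp α = GphHom.id Γ) (h₂ : ρ.comp β = GphHom.id Γ)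
    (g : Raag Γ) (hg : α.map g = β.map g) :
    g ∈ Subgroup.closure (Raag.of '' {v | α.toFun v = β.toFun v}) := by
  classical
  have hg' : g = Raag.proj {v | α.toFun v = β.toFun v} g :=
    calc g = α.fold ρ (α.map g) := (DFunLike.congr_fun (GphHom.fold_comp_map_self h₁) g).symm
      _ = α.fold ρ (β.map g) := by rw [hg]
      _ = _ := DFunLike.congr_fun (GphHom.fold_comp_map_eq_proj h₁ h₂) g
  exact hg' ▸ Raag.proj_mem_closure _ g
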